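/- Let G be a finite simple graph on n vertices and let A ∈ 𝒜_G be a nonzero generalized adjacency matrix of G such that A𝟙 = λ𝟙 where λ := λ_max(A) and 𝟙 is the all-ones vector. Let τ := λ_min(A). Then Υ(A,𝟙) = n / (1 − λ/τ). -/

import Mathlib

open scoped BigOperators Pointwise

variable {V : Type*} [Fintype V] [DecidableEq V]

/-- Inner product on `ℝ^V`. -/
def ip (w z : V → ℝ) : ℝ := ∑ i, w i * z i

/-- `κ` is a positive definite monotone gauge on the nonnegative orthant of `ℝ^V`. -/
def IsPDMGauge (κ : (V → ℝ) → ℝ) : Prop :=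
  κ 0 = 0 ∧
  (∀ w : V → ℝ, 0 ≤ w → 0 ≤ κ w) ∧
  (∀ (c : ℝ) (w : V → ℝ), 0 < c → 0 ≤ w → κ (c • w) = c * κ w) ∧
  (∀ w z : V → ℝ, 0 ≤ w → 0 ≤ z → κ (w + z) ≤ κ w + κ z) ∧
  (∀ w : V → ℝ, 0 ≤ w → w ≠ 0 → 0 < κ w) ∧
  (∀ w z : V → ℝ, 0 ≤ w → w ≤ z → κ w ≤ κ z)

/-- The dual gauge `κ∘(z) = sup{⟨w,z⟩ : w ≥ 0, κ(w) ≤ 1}`. -/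
noncomputable def dualGauge (κ : (V → ℝ) → ℝ) (z : V → ℝ) : ℝ :=
  sSup {r : ℝ | ∃ w : V → ℝ, 0 ≤ w ∧ κ w ≤ 1 ∧ r = ip w z}

/-- The antiblocker of a subset of the nonnegative orthant. -/
def abl (X : Set (V → ℝ)) : Set (V → ℝ) := {y | 0 ≤ y ∧ ∀ x ∈ X, ip x y ≤ 1}

/-- A convex corner: compact, convex, nonempty interior, subset of the nonnegative
orthant, and lower-comprehensive. -/
def IsConvexCorner (C : Set (V → ℝ)) : Prop :=
  IsCompact C ∧ Convex ℝ C ∧ (interior C).Nonempty ∧ (∀ x ∈ C, 0 ≤ x) ∧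
  ∀ x y : V → ℝ, 0 ≤ x → x ≤ y → y ∈ C → x ∈ C

/-- Minkowski functional of a set. -/
noncomputable def minkowski (C : Set (V → ℝ)) (x : V → ℝ) : ℝ :=
  sInf {μ : ℝ | 0 ≤ μ ∧ x ∈ μ • C}

/-- Support function of a set. -/
noncomputable def suppFn (C : Set (V → ℝ)) (y : V → ℝ) : ℝ :=
  sSup {r : ℝ | ∃ x ∈ C, r = ip x y}

/-- A stable (independent) set of vertices. -/
def IsStableSet (G : SimpleGraph V) (S : Finset V) : Prop :=
  ∀ i ∈ S, ∀ j ∈ S, ¬ G.Adj i j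

/-- Weighted stability number `α(G,w)`. -/
noncomputable def alphaW (G : SimpleGraph V) (w : V → ℝ) : ℝ :=
  sSup {r : ℝ | ∃ S : Finset V, IsStableSet G S ∧ r = ∑ i ∈ S, w i}

/-- Stability number `α(G)`. -/
noncomputable def stabilityNumber (G : SimpleGraph V) : ℕ :=
  sSup {n : ℕ | ∃ S : Finset V, IsStableSet G S ∧ S.card = n}

/-- Weighted fractional chromatic number `χ_f(G,w)`. -/
noncomputable def chiF (G : SimpleGraph V) (w : V → ℝ) : ℝ :=
  sInf {r : ℝ | ∃ y : Finset V → ℝ,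
    (∀ S, 0 ≤ y S) ∧ (∀ S, ¬ IsStableSet G S → y S = 0) ∧
    (∀ i, w i ≤ ∑ S : Finset V, (if i ∈ S then y S else 0)) ∧
    r = ∑ S : Finset V, y S}

/-- The stable set polytope `STAB(G)`. -/
def STABset (G : SimpleGraph V) : Set (V → ℝ) :=
  convexHull ℝ {x : V → ℝ | ∃ S : Finset V, IsStableSet G S ∧
    x = fun i => if i ∈ S then (1 : ℝ) else 0}

/-- The fractional stable set polytope `QSTAB(G)`. -/
def QSTABset (H : SimpleGraph V) : Set (V → ℝ) :=
  {x | 0 ≤ x ∧ ∀ K : Finset V, H.IsClique (↑K : Set V) → ∑ i ∈ K, x i ≤ 1}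

/-- The set of (real) eigenvalues of a matrix. -/
def spectrumSet (M : Matrix V V ℝ) : Set ℝ :=
  {t | ∃ x : V → ℝ, x ≠ 0 ∧ M.mulVec x = t • x}

/-- Largest eigenvalue. -/
noncomputable def lambdaMax (M : Matrix V V ℝ) : ℝ := sSup (spectrumSet M)

/-- Smallest eigenvalue. -/
noncomputable def lambdaMin (M : Matrix V V ℝ) : ℝ := sInf (spectrumSet M)

/-- Positive semidefinite square root (zero on non-PSD matrices). -/
noncomputable def psdSqrt (M : Matrix V V ℝ) : Matrix V V ℝ :=
  letI := Classical.dec M.PosSemidef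
  if h : M.PosSemidef then
    (h.1.eigenvectorUnitary : Matrix V V ℝ) *
      Matrix.diagonal (RCLike.ofReal ∘ Real.sqrt ∘ h.1.eigenvalues) *
      (star h.1.eigenvectorUnitary : Matrix V V ℝ)
  else 0

/-- `Â = A / (-λ_min(A))` for nonzero `A`, and `0̂ = 0`. -/
noncomputable def hatM (A : Matrix V V ℝ) : Matrix V V ℝ :=
  if A = 0 then 0 else (-(lambdaMin A))⁻¹ • A

/-- `A` is a generalized adjacency matrix of `G`: symmetric, with `A i j = 0`
whenever `i` and `j` are non-adjacent (in particular on the diagonal). -/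
def IsGenAdj (G : SimpleGraph V) (A : Matrix V V ℝ) : Prop :=
  A.IsSymm ∧ ∀ i j, ¬ G.Adj i j → A i j = 0

/-- Weighted Hoffman bound `H(A,w) = λ_max(W^{1/2}(I+Â)W^{1/2})`, `W = Diag w`. -/
noncomputable def hoffman (A : Matrix V V ℝ) (w : V → ℝ) : ℝ :=
  lambdaMax (psdSqrt (Matrix.diagonal w) * (1 + hatM A) * psdSqrt (Matrix.diagonal w))

/-- The feasible region `𝒰_A` of the SDP defining `Υ(A,·)`. -/
def Uset (A : Matrix V V ℝ) : Set (V → ℝ) :=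
  {x | 0 ≤ x ∧ ((1 : Matrix V V ℝ) -
    psdSqrt (1 + hatM A) * Matrix.diagonal x * psdSqrt (1 + hatM A)).PosSemidef}

/-- `Υ(A,w) = max{⟨w,x⟩ : x ≥ 0, (I+Â)^{1/2} Diag(x) (I+Â)^{1/2} ⪯ I}`. -/
noncomputable def upsilon (A : Matrix V V ℝ) (w : V → ℝ) : ℝ :=
  sSup {r : ℝ | ∃ x ∈ Uset A, r = ip w x}

/-- The diagonal of a matrix, as a vector. -/
def diagVec (M : Matrix V V ℝ) : V → ℝ := fun i => M i i

/-- The convex corner `ℋ_A`. -/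
def Hset (A : Matrix V V ℝ) : Set (V → ℝ) :=
  {x | 0 ≤ x ∧ ∃ Y : Matrix V V ℝ, Y.PosSemidef ∧ Y.trace ≤ 1 ∧
    ∀ i, x i ≤ diagVec (psdSqrt (1 + hatM A) * Y * psdSqrt (1 + hatM A)) i}

/-- Objective function of Luz's convex quadratic program:
`2⟨w,x⟩ − ⟨x, W^{1/2}(I+Â)W^{1/2} x⟩`. -/
noncomputable def luzObj (A : Matrix V V ℝ) (w x : V → ℝ) : ℝ :=
  2 * ip w x - ∑ i, x i *
    ((psdSqrt (Matrix.diagonal w) * (1 + hatM A) * psdSqrt (Matrix.diagonal w)).mulVec x) i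

/-- Luz's bound `ℓ(A,w)` as a real number (supremum of the CQP objective). -/
noncomputable def luz (A : Matrix V V ℝ) (w : V → ℝ) : ℝ :=
  sSup {r : ℝ | ∃ x : V → ℝ, 0 ≤ x ∧ r = luzObj A w x}

/-- Luz's bound `ℓ(A,w)` with values in `ℝ ∪ {±∞}`. -/
noncomputable def luzE (A : Matrix V V ℝ) (w : V → ℝ) : EReal :=
  sSup {r : EReal | ∃ x : V → ℝ, 0 ≤ x ∧ r = ((luzObj A w x : ℝ) : EReal)}

/-- The theta body `TH(G)`. -/
def THbody (G : SimpleGraph V) : Set (V → ℝ) :=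
  {x | 0 ≤ x ∧ ∃ X : Matrix V V ℝ, X.PosSemidef ∧ (∀ i, X i i = x i) ∧
    (∀ i j, G.Adj i j → X i j = 0) ∧
    (Matrix.fromBlocks (1 : Matrix Unit Unit ℝ) (Matrix.of fun _ j => x j)
      (Matrix.of fun i _ => x i) X).PosSemidef}

/-- Weighted Lovász theta number `θ(G,w)`. -/
noncomputable def thetaW (G : SimpleGraph V) (w : V → ℝ) : ℝ :=
  sSup {r : ℝ | ∃ x ∈ THbody G, r = ip w x}

section AuxSpectral

open Matrix

/-- Positive semidefinite square root of a real PSD matrix. -/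
noncomputable def Matrix.PosSemidef.sqrt {M : Matrix V V ℝ} (h : M.PosSemidef) : Matrix V V ℝ :=
  (h.1.eigenvectorUnitary : Matrix V V ℝ) *
    Matrix.diagonal (RCLike.ofReal ∘ Real.sqrt ∘ h.1.eigenvalues) *
    (star h.1.eigenvectorUnitary : Matrix V V ℝ)

lemma Matrix.PosSemidef.posSemidef_sqrt {M : Matrix V V ℝ} (h : M.PosSemidef) :
    h.sqrt.PosSemidef := by
  unfold Matrix.PosSemidef.sqrt
  rw [Matrix.star_eq_conjTranspose]
  refine (Matrix.PosSemidef.diagonal ?_).mul_mul_conjTranspose_same _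
  intro i
  simp only [Function.comp_apply, Pi.zero_apply]
  exact Real.sqrt_nonneg _

lemma Matrix.PosSemidef.sqrt_mul_self {M : Matrix V V ℝ} (h : M.PosSemidef) :
    h.sqrt * h.sqrt = M := by
  unfold Matrix.PosSemidef.sqrt
  set U : Matrix V V ℝ := (h.1.eigenvectorUnitary : Matrix V V ℝ) with hU
  have hst : M = U * Matrix.diagonal h.1.eigenvalues * star U := by
    simpa using h.1.spectral_theorem
  have hU1 : star U * U = 1 := (Matrix.mem_unitaryGroup_iff').mp h.1.eigenvectorUnitary.2
  have hD : Matrix.diagonal (RCLike.ofReal ∘ Real.sqrt ∘ h.1.eigenvalues) *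
      Matrix.diagonal (RCLike.ofReal ∘ Real.sqrt ∘ h.1.eigenvalues) =
      Matrix.diagonal h.1.eigenvalues := by
    rw [Matrix.diagonal_mul_diagonal]
    congr 1
    ext i
    simp only [Function.comp_apply]
    exact Real.mul_self_sqrt (h.eigenvalues_nonneg i)
  calc U * Matrix.diagonal (RCLike.ofReal ∘ Real.sqrt ∘ h.1.eigenvalues) * star U *
        (U * Matrix.diagonal (RCLike.ofReal ∘ Real.sqrt ∘ h.1.eigenvalues) * star U)
      = U * (Matrix.diagonal (RCLike.ofReal ∘ Real.sqrt ∘ h.1.eigenvalues) * (star U * U) *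
          Matrix.diagonal (RCLike.ofReal ∘ Real.sqrt ∘ h.1.eigenvalues)) * star U := by
        simp only [Matrix.mul_assoc]
    _ = M := by rw [hU1, Matrix.mul_one, hD]; exact hst.symm

/-- A real symmetric matrix is Hermitian. -/
lemma isHermitian_of_isSymm {M : Matrix V V ℝ} (h : M.IsSymm) : M.IsHermitian := by
  ext i j
  rw [Matrix.conjTranspose_apply, star_trivial]
  exact congrFun (congrFun h i) j

lemma psdSqrt_eq {M : Matrix V V ℝ} (h : M.PosSemidef) : psdSqrt M = h.sqrt := by
  unfold psdSqrt
  exact dif_pos h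

lemma spectrumSet_eq_range {M : Matrix V V ℝ} (hM : M.IsHermitian) :
    spectrumSet M = Set.range hM.eigenvalues := by
  ext t
  constructor
  · rintro ⟨x, hx, hMx⟩
    have hdet : (M - t • 1).det = 0 := by
      rw [← Matrix.exists_mulVec_eq_zero_iff]
      exact ⟨x, hx, by rw [Matrix.sub_mulVec, Matrix.smul_mulVec, Matrix.one_mulVec, hMx,
        sub_self]⟩
    set U : Matrix V V ℝ := (hM.eigenvectorUnitary : Matrix V V ℝ) with hU
    have hst : M = U * Matrix.diagonal hM.eigenvalues * star U := by
      simpa using hM.spectral_theorem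
    have hU1 : U * star U = 1 := (Matrix.mem_unitaryGroup_iff).mp hM.eigenvectorUnitary.2
    have hdecomp : M - t • 1 = U * (Matrix.diagonal (fun i => hM.eigenvalues i - t)) * star U := by
      have h1 : Matrix.diagonal (fun i => hM.eigenvalues i - t)
          = Matrix.diagonal hM.eigenvalues - t • (1 : Matrix V V ℝ) := by
        rw [Matrix.smul_one_eq_diagonal, Matrix.diagonal_sub]
      rw [h1, Matrix.mul_sub, Matrix.sub_mul, ← hst, Matrix.mul_smul, Matrix.smul_mul, mul_one,
        hU1]
    rw [hdecomp, Matrix.det_mul, Matrix.det_mul, Matrix.det_diagonal] at hdet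
    have hUU : U.det * (star U).det = 1 := by
      rw [← Matrix.det_mul, hU1, Matrix.det_one]
    have hprod : (∏ i, (hM.eigenvalues i - t)) = 0 := by
      have h0 : (∏ i, (hM.eigenvalues i - t)) * (U.det * (star U).det) = 0 := by
        rw [← hdet]; ring
      rwa [hUU, mul_one] at h0
    obtain ⟨i, _, hi⟩ := Finset.prod_eq_zero_iff.mp hprod
    exact ⟨i, (sub_eq_zero.mp hi).symm ▸ rfl⟩
  · rintro ⟨i, rfl⟩
    refine ⟨hM.eigenvectorBasis i, ?_, hM.mulVec_eigenvectorBasis i⟩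
    intro h0
    exact hM.eigenvectorBasis.orthonormal.ne_zero i (by ext j; exact congrFun h0 j)

lemma isGreatest_lambdaMax [Nonempty V] {M : Matrix V V ℝ} (hM : M.IsHermitian) :
    IsGreatest (spectrumSet M) (lambdaMax M) := by
  have h := spectrumSet_eq_range hM
  have hfin : (spectrumSet M).Finite := by rw [h]; exact Set.finite_range _
  have hne : (spectrumSet M).Nonempty := by rw [h]; exact Set.range_nonempty _
  exact ⟨hne.csSup_mem hfin, fun t ht => le_csSup hfin.bddAbove ht⟩

lemma isLeast_lambdaMin [Nonempty V] {M : Matrix V V ℝ} (hM : M.IsHermitian) :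
    IsLeast (spectrumSet M) (lambdaMin M) := by
  have h := spectrumSet_eq_range hM
  have hfin : (spectrumSet M).Finite := by rw [h]; exact Set.finite_range _
  have hne : (spectrumSet M).Nonempty := by rw [h]; exact Set.range_nonempty _
  exact ⟨hne.csInf_mem hfin, fun t ht => csInf_le hfin.bddBelow ht⟩

lemma posSemidef_of_spec {M : Matrix V V ℝ} (hM : M.IsHermitian)
    (h : ∀ t ∈ spectrumSet M, 0 ≤ t) : M.PosSemidef :=
  hM.posSemidef_iff_eigenvalues_nonneg.mpr fun i => h _ (by
    rw [spectrumSet_eq_range hM]; exact Set.mem_range_self i)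

lemma trace_eq_sum_eig {M : Matrix V V ℝ} (hM : M.IsHermitian) :
    M.trace = ∑ i, hM.eigenvalues i := by
  set U : Matrix V V ℝ := (hM.eigenvectorUnitary : Matrix V V ℝ) with hU
  have hst : M = U * Matrix.diagonal hM.eigenvalues * star U := by
    simpa using hM.spectral_theorem
  have hU1 : star U * U = 1 := (Matrix.mem_unitaryGroup_iff').mp hM.eigenvectorUnitary.2
  calc M.trace = (U * Matrix.diagonal hM.eigenvalues * star U).trace := by rw [← hst]
    _ = (star U * (U * Matrix.diagonal hM.eigenvalues)).trace := Matrix.trace_mul_comm _ _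
    _ = ((star U * U) * Matrix.diagonal hM.eigenvalues).trace := by rw [Matrix.mul_assoc]
    _ = ∑ i, hM.eigenvalues i := by rw [hU1, Matrix.one_mul, Matrix.trace_diagonal]

lemma sqrt_mulVec_eig {M : Matrix V V ℝ} (hM : M.PosSemidef) {v : V → ℝ} {μ : ℝ} (hμ : 0 < μ)
    (hv : M *ᵥ v = μ • v) : hM.sqrt *ᵥ v = Real.sqrt μ • v := by
  set B := hM.sqrt with hB
  set r := Real.sqrt μ with hr
  have hrpos : 0 < r := Real.sqrt_pos.mpr hμ
  have hBpsd : B.PosSemidef := hM.posSemidef_sqrt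
  have hP : (B + r • 1).PosDef := by
    refine Matrix.PosDef.of_dotProduct_mulVec_pos ?_ ?_
    · exact hBpsd.1.add (by
        rw [Matrix.IsHermitian, Matrix.conjTranspose_smul, star_trivial,
          Matrix.isHermitian_one.eq])
    · intro x hx
      have h1 := hBpsd.dotProduct_mulVec_nonneg x
      have h2 : (0 : ℝ) < dotProduct x x := by
        have := dotProduct_self_star_pos_iff (v := x)
        simpa [star_trivial] using this.mpr hx
      calc (0 : ℝ) < 0 + r * dotProduct x x := by positivity
        _ ≤ dotProduct (star x) (B *ᵥ x) + r * dotProduct x x := by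
            have := h1; gcongr
        _ = dotProduct (star x) ((B + r • 1) *ᵥ x) := by
            rw [Matrix.add_mulVec, Matrix.smul_mulVec, Matrix.one_mulVec,
              dotProduct_add, dotProduct_smul]
            simp [star_trivial, smul_eq_mul]
  have hinj : Function.Injective ((B + r • 1).mulVec) :=
    Matrix.mulVec_injective_iff_isUnit.mpr hP.isUnit
  have hzero : (B + r • 1) *ᵥ (B *ᵥ v - r • v) = 0 := by
    rw [Matrix.mulVec_sub, Matrix.add_mulVec, Matrix.add_mulVec, Matrix.mulVec_mulVec,
      hM.sqrt_mul_self, hv, Matrix.smul_mulVec, Matrix.smul_mulVec,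
      Matrix.one_mulVec, Matrix.one_mulVec, Matrix.mulVec_smul]
    have hr2 : r • (r • v) = μ • v := by
      rw [smul_smul, hr, Real.mul_self_sqrt hμ.le]
    rw [hr2]
    abel
  have h0 : B *ᵥ v - r • v = 0 := hinj (by rw [hzero, Matrix.mulVec_zero])
  exact sub_eq_zero.mp h0

end AuxSpectral

section MainProof
open Matrix

/-- if `A ∈ 𝒜_G` is nonzero with `A𝟙 = λ_max(A)·𝟙`, then
`Υ(A,𝟙) = n / (1 − λ_max(A)/λ_min(A))`. -/
theorem upsilon_ratio_bound (G : SimpleGraph V) (A : Matrix V V ℝ)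
    (hA : IsGenAdj G A) (hA0 : A ≠ 0)
    (h1 : A.mulVec 1 = lambdaMax A • (1 : V → ℝ)) :
    upsilon A 1 = (Fintype.card V : ℝ) / (1 - lambdaMax A / lambdaMin A) := by
  classical
  have hH : A.IsHermitian := isHermitian_of_isSymm hA.1
  have hVne : Nonempty V := by
    by_contra h
    exact hA0 (by ext i j; exact absurd ⟨i⟩ h)
  set τ := lambdaMin A with hτdef
  set lam := lambdaMax A with hlamdef
  have hGmax := isGreatest_lambdaMax hH
  have hLmin := isLeast_lambdaMin hH
  -- trace is zero
  have htr : ∑ i, hH.eigenvalues i = 0 := by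
    rw [← trace_eq_sum_eig hH]
    have hd : ∀ i, A i i = 0 := fun i => hA.2 i i (G.irrefl)
    simp [Matrix.trace, Matrix.diag, hd]
  -- some eigenvalue is nonzero
  obtain ⟨v, t, ht0, hv0, hvt⟩ := hH.exists_eigenvector_of_ne_zero hA0
  have htmem : t ∈ spectrumSet A := ⟨v, hv0, hvt⟩
  obtain ⟨i0, hi0⟩ : ∃ i, hH.eigenvalues i = t := by
    have := (spectrumSet_eq_range hH) ▸ htmem
    exact this
  have hi0ne : hH.eigenvalues i0 ≠ 0 := hi0 ▸ ht0
  have heigmem : ∀ j, hH.eigenvalues j ∈ spectrumSet A := fun j => by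
    rw [spectrumSet_eq_range hH]; exact Set.mem_range_self j
  have hτneg : τ < 0 := by
    by_contra h
    push_neg at h
    have hall : ∀ j ∈ (Finset.univ : Finset V), (0:ℝ) ≤ hH.eigenvalues j :=
      fun j _ => le_trans h (hLmin.2 (heigmem j))
    exact hi0ne ((Finset.sum_eq_zero_iff_of_nonneg hall).mp htr i0 (Finset.mem_univ i0))
  have hlampos : 0 < lam := by
    by_contra h
    push_neg at h
    have hall : ∀ j ∈ (Finset.univ : Finset V), hH.eigenvalues j ≤ 0 :=
      fun j _ => le_trans (hGmax.2 (heigmem j)) h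
    exact hi0ne ((Finset.sum_eq_zero_iff_of_nonpos hall).mp htr i0 (Finset.mem_univ i0))
  set c := (-τ)⁻¹ with hc
  have hτne : τ ≠ 0 := hτneg.ne
  have hcpos : 0 < c := inv_pos.mpr (neg_pos.mpr hτneg)
  have hcτ : c * τ = -1 := by
    rw [hc]; field_simp
  have hhat : hatM A = c • A := by
    unfold hatM
    rw [if_neg hA0]
  set μ := 1 - lam / τ with hμdef
  have hμeq : μ = 1 + c * lam := by
    have hτne' : -τ ≠ 0 := neg_ne_zero.mpr hτne
    rw [hμdef, hc]
    field_simp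
    ring
  have hμpos : 0 < μ := by
    rw [hμeq]; nlinarith [mul_pos hcpos hlampos]
  set N := (1 : Matrix V V ℝ) + c • A with hN
  have hsmulherm : (c • A).IsHermitian := by
    rw [Matrix.IsHermitian, Matrix.conjTranspose_smul, star_trivial, hH.eq]
  have hNherm : N.IsHermitian := Matrix.isHermitian_one.add hsmulherm
  -- bounds on the spectrum of N
  have hspecN : ∀ s ∈ spectrumSet N, 0 ≤ s ∧ s ≤ μ := by
    rintro s ⟨y, hy0, hys⟩
    rw [hN, Matrix.add_mulVec, Matrix.one_mulVec, Matrix.smul_mulVec] at hys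
    have h' : c • (A *ᵥ y) = (s - 1) • y := by
      have : y + c • (A *ᵥ y) - y = s • y - y := by rw [hys]
      simpa [sub_smul, one_smul, add_sub_cancel_left] using this
    have hAy : A *ᵥ y = (c⁻¹ * (s - 1)) • y := by
      calc A *ᵥ y = c⁻¹ • (c • (A *ᵥ y)) := by
            rw [smul_smul, inv_mul_cancel₀ hcpos.ne', one_smul]
        _ = c⁻¹ • ((s - 1) • y) := by rw [h']
        _ = (c⁻¹ * (s - 1)) • y := smul_smul _ _ _
    have hmem : (c⁻¹ * (s - 1)) ∈ spectrumSet A := ⟨y, hy0, hAy⟩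
    have h1 : c⁻¹ * (s - 1) ≤ lam := hGmax.2 hmem
    have h2 : τ ≤ c⁻¹ * (s - 1) := hLmin.2 hmem
    have hcc : c * (c⁻¹ * (s - 1)) = s - 1 := by
      rw [← mul_assoc, mul_inv_cancel₀ hcpos.ne', one_mul]
    constructor
    · nlinarith [mul_le_mul_of_nonneg_left h2 hcpos.le]
    · nlinarith [mul_le_mul_of_nonneg_left h1 hcpos.le]
  have hNpsd : N.PosSemidef := posSemidef_of_spec hNherm (fun t ht => (hspecN t ht).1)
  have hhat1 : (1 : Matrix V V ℝ) + hatM A = N := by rw [hhat]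
  have hsq : psdSqrt ((1 : Matrix V V ℝ) + hatM A) = hNpsd.sqrt := by
    rw [hhat1]; exact psdSqrt_eq hNpsd
  set B := hNpsd.sqrt with hB
  have hBpsd : B.PosSemidef := hNpsd.posSemidef_sqrt
  have hBB : B * B = N := hNpsd.sqrt_mul_self
  have hBsymm : Bᵀ = B := by
    ext i j
    have := congrFun (congrFun hBpsd.1.eq i) j
    rw [Matrix.conjTranspose_apply, star_trivial] at this
    rw [Matrix.transpose_apply, ← this]
  -- 𝟙 is an eigenvector of N with eigenvalue μ
  have hN1 : N *ᵥ (1 : V → ℝ) = μ • 1 := by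
    rw [hN, Matrix.add_mulVec, Matrix.one_mulVec, Matrix.smul_mulVec, h1,
      smul_smul, hμeq, add_smul, one_smul]
  have hB1 : B *ᵥ (1 : V → ℝ) = Real.sqrt μ • 1 := sqrt_mulVec_eig hNpsd hμpos hN1
  set r := Real.sqrt μ with hr
  have hr2 : r * r = μ := Real.mul_self_sqrt hμpos.le
  -- the optimal point
  set x0 : V → ℝ := μ⁻¹ • (1 : V → ℝ) with hx0
  have hx0nonneg : (0 : V → ℝ) ≤ x0 := by
    intro i
    simp only [hx0, Pi.smul_apply, Pi.one_apply, smul_eq_mul, mul_one, Pi.zero_apply]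
    positivity
  have hdiagx0 : Matrix.diagonal x0 = μ⁻¹ • (1 : Matrix V V ℝ) := by
    have hdone : Matrix.diagonal (1 : V → ℝ) = (1 : Matrix V V ℝ) := Matrix.diagonal_one
    rw [hx0, Matrix.diagonal_smul, hdone]
  have hx0mem : x0 ∈ Uset A := by
    refine ⟨hx0nonneg, ?_⟩
    rw [hsq, hdiagx0]
    have hmat : (1 : Matrix V V ℝ) - B * (μ⁻¹ • (1 : Matrix V V ℝ)) * B
        = 1 - μ⁻¹ • N := by
      rw [Matrix.mul_smul, Matrix.mul_one, Matrix.smul_mul, hBB]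
    rw [hmat]
    have hherm : ((1 : Matrix V V ℝ) - μ⁻¹ • N).IsHermitian :=
      Matrix.isHermitian_one.sub (by
        rw [Matrix.IsHermitian, Matrix.conjTranspose_smul, star_trivial, hNherm.eq])
    refine posSemidef_of_spec hherm ?_
    rintro t ⟨y, hy0, hyt⟩
    rw [Matrix.sub_mulVec, Matrix.one_mulVec, Matrix.smul_mulVec] at hyt
    have h' : μ⁻¹ • (N *ᵥ y) = (1 - t) • y := by
      have : y - μ⁻¹ • (N *ᵥ y) - y = t • y - y := by rw [hyt]
      have h2 : -(μ⁻¹ • (N *ᵥ y)) = -((1 - t) • y) := by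
        simpa [sub_smul, one_smul, sub_sub_cancel_left] using this
      simpa using h2
    have hNy : N *ᵥ y = (μ * (1 - t)) • y := by
      calc N *ᵥ y = μ • (μ⁻¹ • (N *ᵥ y)) := by
            rw [smul_smul, mul_inv_cancel₀ hμpos.ne', one_smul]
        _ = μ • ((1 - t) • y) := by rw [h']
        _ = (μ * (1 - t)) • y := smul_smul _ _ _
    have hmem : (μ * (1 - t)) ∈ spectrumSet N := ⟨y, hy0, hNy⟩
    have := (hspecN _ hmem).2
    nlinarith
  have hipx0 : ip (1 : V → ℝ) x0 = (Fintype.card V : ℝ) / μ := by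
    simp only [ip, hx0, Pi.smul_apply, Pi.one_apply, smul_eq_mul, mul_one, one_mul]
    rw [Finset.sum_const, Finset.card_univ, nsmul_eq_mul, div_eq_mul_inv]
  -- upper bound
  have hub : ∀ x ∈ Uset A, ip (1 : V → ℝ) x ≤ (Fintype.card V : ℝ) / μ := by
    rintro x ⟨hxnn, hxP⟩
    rw [hsq] at hxP
    have hq := hxP.dotProduct_mulVec_nonneg (1 : V → ℝ)
    have hstar : star (1 : V → ℝ) = 1 := by ext i; simp
    rw [hstar] at hq
    have hone : dotProduct (1 : V → ℝ) (1 : V → ℝ) = (Fintype.card V : ℝ) := by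
      simp [dotProduct, Finset.card_univ]
    have hDmul : Matrix.diagonal x *ᵥ (1 : V → ℝ) = x := by
      ext i; rw [Matrix.mulVec_diagonal]; simp
    have hcomp : dotProduct (1 : V → ℝ)
        (((1 : Matrix V V ℝ) - B * Matrix.diagonal x * B) *ᵥ 1)
        = (Fintype.card V : ℝ) - μ * ip 1 x := by
      rw [Matrix.sub_mulVec, Matrix.one_mulVec, dotProduct_sub, hone]
      congr 1
      rw [← Matrix.mulVec_mulVec, ← Matrix.mulVec_mulVec, hB1, Matrix.mulVec_smul, hDmul,
        Matrix.mulVec_smul, dotProduct_smul]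
      rw [Matrix.dotProduct_mulVec, ← Matrix.mulVec_transpose, hBsymm, hB1]
      have : dotProduct (r • (1 : V → ℝ)) x = r * dotProduct 1 x := by
        rw [smul_dotProduct]; simp
      rw [this, smul_eq_mul, ← mul_assoc, hr2]
      rfl
    rw [hcomp] at hq
    rw [le_div_iff₀ hμpos]
    linarith
  have hgreat : IsGreatest {s : ℝ | ∃ x ∈ Uset A, s = ip 1 x} ((Fintype.card V : ℝ) / μ) :=
    ⟨⟨x0, hx0mem, hipx0.symm⟩, by rintro s ⟨x, hx, rfl⟩; exact hub x hx⟩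
  rw [upsilon]
  exact hgreat.csSup_eq

end MainProof
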